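/- Let V be a finite-dimensional real inner product space and let P : V → V be a linear map with P² = P, P ≠ 0, and P ≠ I. Then the operator norms of P and of I − P (with respect to the norm induced by the inner product) are equal: ‖I − P‖ = ‖P‖. -/

import Mathlib

/-!
Write `x = a + b` with `a = P x` and `b = x - P x`. Since `P (a + d • b) = a` for every real `d`,
the distance from `a` to the line `ℝ b` is at least `‖a‖ / ‖P‖`; in the plane spanned by `a` and
`b` this lower bound on the angle between `a` and `b` is exactly what is needed to get
`‖b‖ ≤ ‖P‖ ‖a + b‖`. Hence `‖1 - P‖ ≤ ‖P‖`, and the reverse inequality follows by applying this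
to the idempotent `1 - P`.
-/

open RealInnerProductSpace

theorem IsIdempotentElem.one_le_norm {R : Type*} [NonUnitalSeminormedRing R] {p : R}
    (hp : IsIdempotentElem p) (h0 : ‖p‖ ≠ 0) : 1 ≤ ‖p‖ := by
  have hpos : 0 < ‖p‖ := lt_of_le_of_ne (norm_nonneg p) (Ne.symm h0)
  have : ‖p‖ * 1 ≤ ‖p‖ * ‖p‖ := by simpa [hp.eq] using norm_mul_le p p
  exact le_of_mul_le_mul_left this hpos

theorem neg_two_mul_le_of_mul_sq_le_mul {s t A B : ℝ} (hs : 1 ≤ s) (hA : 0 ≤ A) (hB : 0 ≤ B)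
    (h : s * t ^ 2 ≤ (s - 1) * A * B) : -(2 * s * t) ≤ s * A + (s - 1) * B := by
  have hsq : (2 * s * t) ^ 2 ≤ (s * A + (s - 1) * B) ^ 2 := by
    nlinarith [sq_nonneg (s * A - (s - 1) * B)]
  exact neg_le.mp (abs_le_of_sq_le_sq' hsq (by positivity)).1

section

variable {V : Type*} [NormedAddCommGroup V] [InnerProductSpace ℝ V]

theorem norm_le_mul_norm_add_of_forall_norm_le_mul_norm_add_smul {a b : V} {K : ℝ}
    (hK : 1 ≤ K) (h : ∀ d : ℝ, ‖a‖ ≤ K * ‖a + d • b‖) : ‖b‖ ≤ K * ‖a + b‖ := by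
  rcases eq_or_ne b 0 with rfl | hb
  · simp only [norm_zero, add_zero]
    positivity
  set t := ⟪a, b⟫
  have hB : 0 < ‖b‖ ^ 2 := by positivity
  -- `a - (t / ‖b‖²) • b` is the component of `a` orthogonal to `b`
  have hperp : ‖a + (-(t / ‖b‖ ^ 2)) • b‖ ^ 2 = ‖a‖ ^ 2 - t ^ 2 / ‖b‖ ^ 2 := by
    rw [norm_add_sq_real, inner_smul_right, norm_smul, mul_pow, Real.norm_eq_abs, sq_abs]
    field_simp
    ring
  have hangle : K ^ 2 * t ^ 2 ≤ (K ^ 2 - 1) * ‖a‖ ^ 2 * ‖b‖ ^ 2 := by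
    have := pow_le_pow_left₀ (norm_nonneg a) (h (-(t / ‖b‖ ^ 2))) 2
    rw [mul_pow, hperp] at this
    field_simp at this
    nlinarith
  have hcross := neg_two_mul_le_of_mul_sq_le_mul (one_le_pow₀ hK) (by positivity) hB.le hangle
  have hsq : ‖b‖ ^ 2 ≤ (K * ‖a + b‖) ^ 2 := by
    rw [mul_pow, norm_add_sq_real]
    linarith
  exact (sq_le_sq₀ (norm_nonneg b) (by positivity)).mp hsq

namespace ContinuousLinearMap

variable {P : V →L[ℝ] V}

theorem norm_sub_apply_le_of_isIdempotentElem (hP : IsIdempotentElem P) (h0 : P ≠ 0) (x : V) :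
    ‖x - P x‖ ≤ ‖P‖ * ‖x‖ := by
  have hPP : P (P x) = P x := congrArg (· x) hP.eq
  have hbound (d : ℝ) : ‖P x‖ ≤ ‖P‖ * ‖P x + d • (x - P x)‖ :=
    calc ‖P x‖ = ‖P (P x + d • (x - P x))‖ := by simp [hPP]
      _ ≤ ‖P‖ * ‖P x + d • (x - P x)‖ := P.le_opNorm _
  simpa using norm_le_mul_norm_add_of_forall_norm_le_mul_norm_add_smul
    (hP.one_le_norm (norm_ne_zero_iff.mpr h0)) hbound

theorem norm_one_sub_le_of_isIdempotentElem (hP : IsIdempotentElem P) (h0 : P ≠ 0) :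
    ‖1 - P‖ ≤ ‖P‖ :=
  opNorm_le_bound _ (norm_nonneg P) fun x => by
    simpa using norm_sub_apply_le_of_isIdempotentElem hP h0 x

theorem norm_one_sub_eq_of_isIdempotentElem (hP : IsIdempotentElem P) (h0 : P ≠ 0)
    (h1 : P ≠ 1) : ‖1 - P‖ = ‖P‖ :=
  le_antisymm (norm_one_sub_le_of_isIdempotentElem hP h0) <| by
    simpa using norm_one_sub_le_of_isIdempotentElem hP.one_sub (sub_ne_zero.mpr h1.symm)

end ContinuousLinearMap

end

theorem stmt_7_general {V : Type*} [NormedAddCommGroup V] [InnerProductSpace ℝ V]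
    (P : V →L[ℝ] V) (hidem : P.comp P = P) (h0 : P ≠ 0)
    (hI : P ≠ ContinuousLinearMap.id ℝ V) :
    ‖ContinuousLinearMap.id ℝ V - P‖ = ‖P‖ :=
  ContinuousLinearMap.norm_one_sub_eq_of_isIdempotentElem hidem h0 hI

theorem stmt_7 {V : Type*} [NormedAddCommGroup V] [InnerProductSpace ℝ V]
    [FiniteDimensional ℝ V]
    (P : V →L[ℝ] V) (hidem : P.comp P = P) (h0 : P ≠ 0)
    (hI : P ≠ ContinuousLinearMap.id ℝ V) :
    ‖ContinuousLinearMap.id ℝ V - P‖ = ‖P‖ :=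
  stmt_7_general P hidem h0 hI
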